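/- arXiv:2211.16399 — 2 statements merged into one kernel-verified Lean document; each statement's English description precedes it below -/
import Mathlib

section
/- Let 0 < γ + λ < 1 (so that 1 ≤ 2 - γ - λ). Then there is a constant C > 0 depending only on γ, λ such that for all 0 < ξ ≤ z, K(ξ,z) · ((ξ+z)^{2-γ-λ} - ξ^{2-γ-λ} - z^{2-γ-λ}) ≤ C (z ξ^{1-λ} + ξ z^{1-λ}), where K(ξ,z) = ξ^{γ+λ} z^{-λ} + ξ^{-λ} z^{γ+λ}. -/
/-- for `0 < γ + λ < 1 ≤ 2 - γ - λ` there is `C > 0` such that for all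
`0 < ξ ≤ z`, `K(ξ,z)((ξ+z)^(2-γ-λ) - ξ^(2-γ-λ) - z^(2-γ-λ)) ≤ C (z ξ^(1-λ) + ξ z^(1-λ))`,
where `K(ξ,z) = ξ^(γ+λ) z^(-λ) + ξ^(-λ) z^(γ+λ)`. -/
theorem stmt_5 (γ lam : ℝ) (h0 : 0 < γ + lam) (h1 : γ + lam < 1)
    (h2 : 1 ≤ 2 - γ - lam) :
    ∃ C : ℝ, 0 < C ∧ ∀ ξ z : ℝ, 0 < ξ → ξ ≤ z →
      (ξ ^ (γ + lam) * z ^ (-lam) + ξ ^ (-lam) * z ^ (γ + lam)) *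
          ((ξ + z) ^ (2 - γ - lam) - ξ ^ (2 - γ - lam) - z ^ (2 - γ - lam))
        ≤ C * (z * ξ ^ (1 - lam) + ξ * z ^ (1 - lam)) := by
  refine ⟨3, by norm_num, fun ξ z hξ hz => ?_⟩
  have hz0 : 0 < z := hξ.trans_le hz
  set a : ℝ := 2 - γ - lam with ha
  have ha1 : 1 ≤ a := h2
  have ha2 : a ≤ 2 := by rw [ha]; linarith
  set η : ℝ := ξ / z with hη
  have hη0 : 0 < η := div_pos hξ hz0
  have hη1 : η ≤ 1 := (div_le_one hz0).mpr hz
  have hsum : ξ + z = z * (1 + η) := by rw [hη]; field_simp; ring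
  have hpow : (ξ + z) ^ a = z ^ a * (1 + η) ^ a := by
    rw [hsum, Real.mul_rpow hz0.le (by linarith)]
  have h1a : (1 + η) ^ a ≤ (1 + η) ^ (2 : ℝ) :=
    Real.rpow_le_rpow_of_exponent_le (by linarith) ha2
  have h2a : (1 + η) ^ (2 : ℝ) ≤ 1 + 3 * η := by
    rw [show (2:ℝ) = ((2:ℕ):ℝ) by norm_num, Real.rpow_natCast]
    nlinarith
  have hza : z ^ a * η = ξ * z ^ (a - 1) := by
    have hd : z ^ (a - 1) = z ^ a / z := by
      rw [show a - 1 = a + (-1) by ring, Real.rpow_add hz0,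
        Real.rpow_neg hz0.le, Real.rpow_one]
      ring
    rw [hd, hη]
    field_simp
  have hbr : (ξ + z) ^ a - ξ ^ a - z ^ a ≤ 3 * (ξ * z ^ (a - 1)) := by
    have hξa : 0 ≤ ξ ^ a := Real.rpow_nonneg hξ.le a
    have hb : (ξ + z) ^ a ≤ z ^ a * (1 + 3 * η) := by
      rw [hpow]
      have := Real.rpow_nonneg hz0.le a
      nlinarith
    have h3 : z ^ a * (1 + 3 * η) = z ^ a + 3 * (ξ * z ^ (a-1)) := by
      rw [← hza]; ring
    linarith
  set K : ℝ := ξ ^ (γ + lam) * z ^ (-lam) + ξ ^ (-lam) * z ^ (γ + lam) with hK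
  have hK0 : 0 ≤ K := by
    have := Real.rpow_nonneg hξ.le (γ + lam)
    have := Real.rpow_nonneg hξ.le (-lam)
    have := Real.rpow_nonneg hz0.le (-lam)
    have := Real.rpow_nonneg hz0.le (γ + lam)
    positivity
  have hmain : K * ((ξ + z) ^ a - ξ ^ a - z ^ a) ≤ K * (3 * (ξ * z ^ (a - 1))) :=
    mul_le_mul_of_nonneg_left hbr hK0
  refine hmain.trans ?_
  have e1 : ξ ^ (γ + lam) * z ^ (-lam) * (ξ * z ^ (a - 1))
      = ξ ^ (1 + γ + lam) * z ^ (1 - γ - 2 * lam) := by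
    calc ξ ^ (γ + lam) * z ^ (-lam) * (ξ * z ^ (a - 1))
        = (ξ ^ (γ + lam) * ξ ^ (1:ℝ)) * (z ^ (-lam) * z ^ (a - 1)) := by
          rw [Real.rpow_one]; ring
      _ = ξ ^ (γ + lam + 1) * z ^ (-lam + (a - 1)) := by
          rw [← Real.rpow_add hξ, ← Real.rpow_add hz0]
      _ = ξ ^ (1 + γ + lam) * z ^ (1 - γ - 2 * lam) := by
          rw [show γ + lam + 1 = 1 + γ + lam by ring,
            show -lam + (a - 1) = 1 - γ - 2 * lam by rw [ha]; ring]
  have e2 : ξ ^ (-lam) * z ^ (γ + lam) * (ξ * z ^ (a - 1))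
      = ξ ^ (1 - lam) * z := by
    calc ξ ^ (-lam) * z ^ (γ + lam) * (ξ * z ^ (a - 1))
        = (ξ ^ (-lam) * ξ ^ (1:ℝ)) * (z ^ (γ + lam) * z ^ (a - 1)) := by
          rw [Real.rpow_one]; ring
      _ = ξ ^ (-lam + 1) * z ^ (γ + lam + (a - 1)) := by
          rw [← Real.rpow_add hξ, ← Real.rpow_add hz0]
      _ = ξ ^ (1 - lam) * z := by
          rw [show -lam + 1 = 1 - lam by ring,
            show γ + lam + (a - 1) = 1 by rw [ha]; ring, Real.rpow_one]
  have e3 : ξ ^ (1 + γ + lam) * z ^ (1 - γ - 2 * lam) ≤ ξ * z ^ (1 - lam) := by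
    have hx : ξ ^ (1 + γ + lam) = ξ * ξ ^ (γ + lam) := by
      rw [show (1 : ℝ) + γ + lam = 1 + (γ + lam) by ring, Real.rpow_add hξ,
        Real.rpow_one]
    have hxz : ξ ^ (γ + lam) ≤ z ^ (γ + lam) :=
      Real.rpow_le_rpow hξ.le hz h0.le
    have hzz : z ^ (γ + lam) * z ^ (1 - γ - 2 * lam) = z ^ (1 - lam) := by
      rw [← Real.rpow_add hz0, show γ + lam + (1 - γ - 2 * lam) = 1 - lam by ring]
    have hzp : (0:ℝ) ≤ z ^ (1 - γ - 2 * lam) := Real.rpow_nonneg hz0.le _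
    calc ξ ^ (1 + γ + lam) * z ^ (1 - γ - 2 * lam)
        ≤ ξ * z ^ (γ + lam) * z ^ (1 - γ - 2 * lam) := by
          rw [hx]
          exact mul_le_mul_of_nonneg_right
            (mul_le_mul_of_nonneg_left hxz hξ.le) hzp
      _ = ξ * z ^ (1 - lam) := by rw [mul_assoc, hzz]
  have expand : K * (3 * (ξ * z ^ (a - 1)))
      = 3 * (ξ ^ (1 + γ + lam) * z ^ (1 - γ - 2 * lam) + ξ ^ (1 - lam) * z) := by
    rw [hK, add_mul, ← e1, ← e2]; ring
  rw [expand]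
  nlinarith [e3]
end

section
/- Let γ < 1, γ + λ < 1, and let α : [0,T] → ℝ be continuous with 0 < k₁ ≤ α(t) ≤ k₂ for all t. Define V(x,α) = x^{γ+λ}/α - (2/(1-γ)) x and ρ(k₂) = ((1-γ)/(2k₂))^{1/(1-γ-λ)}. Then V(x, α(t)) > 0 for every t ∈ [0,T] and every x with 0 < x < ρ(k₂). Consequently, any solution of x'(t) = V(x(t), α(t)) with x(0) ≥ ρ(k₂) satisfies x(t) ≥ ρ(k₂) for all t ∈ [0,T]. -/
/-- the transport field `V(x,α) = x^(γ+λ)/α - (2/(1-γ)) x` is positive below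
the stagnation point `ρ(k₂) = ((1-γ)/(2k₂))^(1/(1-γ-λ))`, and `{x ≥ ρ(k₂)}` is invariant
for the characteristic ODE. -/
theorem stmt_7 (γ lam k₁ k₂ T : ℝ) (hγ : γ < 1) (hγlam : γ + lam < 1)
    (hk₁ : 0 < k₁) (hk : k₁ ≤ k₂) (hT : 0 < T)
    (α : ℝ → ℝ) (hαc : ContinuousOn α (Set.Icc 0 T))
    (hα : ∀ t ∈ Set.Icc (0:ℝ) T, k₁ ≤ α t ∧ α t ≤ k₂)
    (V : ℝ → ℝ → ℝ) (hV : ∀ x a : ℝ, V x a = x ^ (γ + lam) / a - 2 / (1 - γ) * x)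
    (ρ : ℝ) (hρ : ρ = ((1 - γ) / (2 * k₂)) ^ (1 / (1 - γ - lam))) :
    (∀ t ∈ Set.Icc (0:ℝ) T, ∀ x : ℝ, 0 < x → x < ρ → 0 < V x (α t)) ∧
    (∀ x : ℝ → ℝ,
      (∀ t ∈ Set.Icc (0:ℝ) T, HasDerivAt x (V (x t) (α t)) t) →
      ρ ≤ x 0 → ∀ t ∈ Set.Icc (0:ℝ) T, ρ ≤ x t) := by
  have hk₂ : 0 < k₂ := lt_of_lt_of_le hk₁ hk
  have h1γ : (0:ℝ) < 1 - γ := by linarith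
  have hb : (0:ℝ) < (1 - γ) / (2 * k₂) := by positivity
  have he : (0:ℝ) < 1 - γ - lam := by linarith
  have hρpos : 0 < ρ := by rw [hρ]; positivity
  -- ρ ^ (γ + lam - 1) = 2 * k₂ / (1 - γ)
  have hρpow : ρ ^ (γ + lam - 1) = 2 * k₂ / (1 - γ) := by
    rw [hρ, ← Real.rpow_mul (le_of_lt hb)]
    have : 1 / (1 - γ - lam) * (γ + lam - 1) = -1 := by
      field_simp
      ring
    rw [this, Real.rpow_neg_one]
    rw [inv_div]
  have key : ∀ t ∈ Set.Icc (0:ℝ) T, ∀ x : ℝ, 0 < x → x < ρ → 0 < V x (α t) := by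
    intro t ht x hx hxρ
    obtain ⟨ha1, ha2⟩ := hα t ht
    have ha : 0 < α t := lt_of_lt_of_le hk₁ ha1
    have h1 : ρ ^ (γ + lam - 1) < x ^ (γ + lam - 1) :=
      Real.rpow_lt_rpow_of_neg hx hxρ (by linarith)
    rw [hρpow] at h1
    have h2 : 2 * α t / (1 - γ) < x ^ (γ + lam - 1) := by
      have hle : 2 * α t / (1 - γ) ≤ 2 * k₂ / (1 - γ) := by gcongr
      linarith
    have h3 : x ^ (γ + lam) = x ^ (γ + lam - 1) * x := by
      rw [← Real.rpow_add_one (ne_of_gt hx)]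
      norm_num
    rw [hV]
    rw [h3]
    rw [sub_pos, lt_div_iff₀ ha]
    have := mul_lt_mul_of_pos_right h2 hx
    calc 2 / (1 - γ) * x * α t = (2 * α t / (1 - γ)) * x := by ring
      _ < x ^ (γ + lam - 1) * x := this
  refine ⟨key, ?_⟩
  intro x hx hx0 t ht
  by_contra hlt
  push_neg at hlt
  -- continuity of x on Icc 0 T
  have hxc : ∀ s ∈ Set.Icc (0:ℝ) T, ContinuousAt x s := fun s hs => (hx s hs).continuousAt
  set L : ℝ := max (x t) (ρ / 2) with hL
  have hLρ : L < ρ := max_lt hlt (by linarith)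
  have hLpos : 0 < L := lt_of_lt_of_le (by linarith) (le_max_right _ _)
  set S : Set ℝ := Set.Icc 0 t ∩ x ⁻¹' Set.Iic L with hS
  have htS : t ∈ S := ⟨Set.right_mem_Icc.mpr ht.1, show x t ≤ L from le_max_left _ _⟩
  have hSne : S.Nonempty := ⟨t, htS⟩
  have hSbdd : BddBelow S := ⟨0, fun r hr => hr.1.1⟩
  have hsub : Set.Icc (0:ℝ) t ⊆ Set.Icc 0 T := Set.Icc_subset_Icc le_rfl ht.2
  have hScl : IsClosed S := by
    apply ContinuousOn.preimage_isClosed_of_isClosed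
    · exact fun s hs => ((hxc s (hsub hs)).continuousWithinAt)
    · exact isClosed_Icc
    · exact isClosed_Iic
  set w := sInf S with hw
  have hwS : w ∈ S := hScl.csInf_mem hSne hSbdd
  have hwIcc : w ∈ Set.Icc (0:ℝ) T := hsub hwS.1
  have hw0 : 0 < w := by
    rcases lt_or_eq_of_le hwS.1.1 with h | h
    · exact h
    · exfalso
      have : x w ≤ L := hwS.2
      rw [← h] at this
      linarith [le_trans hx0 this, hLρ]
  have hbelow : ∀ r, 0 ≤ r → r < w → L < x r := by
    intro r hr0 hrw
    by_contra hc
    push_neg at hc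
    have : r ∈ S := ⟨⟨hr0, le_trans (le_of_lt hrw) hwS.1.2⟩, hc⟩
    exact absurd (csInf_le hSbdd this) (not_le.mpr hrw)
  -- x w ≥ L from the left limit
  have hxwge : L ≤ x w := by
    have htend : Filter.Tendsto x (nhdsWithin w (Set.Iio w)) (nhds (x w)) :=
      ((hxc w hwIcc).continuousWithinAt)
    refine ge_of_tendsto htend ?_
    filter_upwards [Ioo_mem_nhdsLT_of_mem (by constructor <;> [exact hw0; exact le_rfl])]
      with r hr
    exact le_of_lt (hbelow r (le_of_lt hr.1) hr.2)
  have hxwL : x w = L := le_antisymm hwS.2 hxwge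
  -- derivative at w is positive
  have hdpos : 0 < V (x w) (α w) := key w hwIcc (x w) (by rw [hxwL]; exact hLpos) (by rw [hxwL]; exact hLρ)
  -- but derivative at w is ≤ 0 since w is a left minimum
  have hder := hx w hwIcc
  have hslope : Filter.Tendsto (slope x w) (nhdsWithin w (Set.Iio w)) (nhds (V (x w) (α w))) := by
    have := hasDerivAt_iff_tendsto_slope.mp hder
    exact this.mono_left (nhdsWithin_mono w (fun r hr => ne_of_lt hr))
  have hdnonpos : V (x w) (α w) ≤ 0 := by
    refine le_of_tendsto hslope ?_
    filter_upwards [Ioo_mem_nhdsLT_of_mem (by constructor <;> [exact hw0; exact le_rfl])]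
      with r hr
    have h1 : 0 < x r - x w := by
      rw [hxwL]; linarith [hbelow r (le_of_lt hr.1) hr.2]
    have h2 : r - w < 0 := by linarith [hr.2]
    rw [slope_def_field]
    exact le_of_lt (div_neg_of_pos_of_neg h1 h2)
  linarith
end
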